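/- arXiv:2604.03668 — 4 statements merged into one kernel-verified Lean document; each statement's English description precedes it below -/
import Mathlib

section
/- In the setting of compatible inductive systems of C*-algebras with levelwise short exact sequences, if $b \in B = \varinjlim B_i$ satisfies $\psi(b) = 0$, then $b$ lies in the image of the induced map $\phi : A \to B$. Consequently $\mathrm{Ker}(\psi) = \mathrm{Im}(\phi)$. -/
open scoped CStarAlgebra

/-!
Each `φᵢ` is an injective *-homomorphism, hence isometric, so the norm formula for the limits
makes `φ` isometric and its range closed. If `ψ b = 0`, approximate `b` by some `ιB i bᵢ`; then
`ψᵢ bᵢ` is small in `LC`, hence already small at some later stage `j`. In a C⋆-algebra an element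
whose image under a *-homomorphism has norm at most `δ` lies within `δ` of the kernel, so `β i j bᵢ`
is close to `ker ψⱼ = range φⱼ`, which puts `b` in the closure of `range φ`.
-/

lemma norm_le_norm_of_mem_quasispectrum {A : Type*} [NonUnitalCStarAlgebra A] {a : A} {t : ℝ}
    (ht : t ∈ quasispectrum ℝ a) : ‖t‖ ≤ ‖a‖ := by
  rw [Unitization.quasispectrum_eq_spectrum_inr' ℝ ℂ] at ht
  simpa [Unitization.norm_inr] using spectrum.norm_le_norm_of_mem ht

lemma star_mul_self_sub_mul_cfcₙ {B : Type*} [NonUnitalCStarAlgebra B] (b : B) {f : ℝ → ℝ}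
    (hf : Continuous f) (hf0 : f 0 = 0) :
    star (b - b * cfcₙ f (star b * b)) * (b - b * cfcₙ f (star b * b))
      = cfcₙ (fun t => t * (1 - f t) ^ 2) (star b * b) := by
  have hsplit : cfcₙ (fun t => t * (1 - f t) ^ 2) (star b * b)
      = cfcₙ (fun t => t - t * f t - f t * t + f t * t * f t) (star b * b) :=
    cfcₙ_congr fun t _ => by ring
  rw [hsplit, cfcₙ_add _ _ (star b * b), cfcₙ_sub _ _ (star b * b), cfcₙ_sub _ _ (star b * b),
    cfcₙ_mul _ _ (star b * b), cfcₙ_mul _ _ (star b * b), cfcₙ_mul _ _ (star b * b),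
    cfcₙ_mul _ _ (star b * b), cfcₙ_id' ℝ (star b * b)]
  have he : star (cfcₙ f (star b * b)) = cfcₙ f (star b * b) :=
    IsSelfAdjoint.star_eq (cfcₙ_predicate f _)
  simp only [star_sub, star_mul, he]
  noncomm_ring

/-- The cutoff `f` vanishes on `[-δ², δ²]`, which contains the quasispectrum of `ψ(b)⋆ψ(b)`,
while `|t| (1 - f t)² ≤ δ²` bounds `‖b - b f(b⋆b)‖²`. -/
lemma exists_map_eq_zero_norm_sub_le {B C : Type*} [NonUnitalCStarAlgebra B]
    [NonUnitalCStarAlgebra C] (ψ : B →⋆ₙₐ[ℂ] C) (b : B) {δ : ℝ} (hδ : 0 < δ)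
    (h : ‖ψ b‖ ≤ δ) : ∃ k, ψ k = 0 ∧ ‖b - k‖ ≤ δ := by
  set f : ℝ → ℝ := fun t => 1 - δ / max √|t| δ
  have hmax : ∀ t : ℝ, 0 < max √|t| δ := fun t => hδ.trans_le (le_max_right _ _)
  have hf : Continuous f :=
    continuous_const.sub (continuous_const.div (by fun_prop) fun t => (hmax t).ne')
  have hf0 : f 0 = 0 := by simp [f, hδ.le, hδ.ne']
  have hf_small : ∀ t : ℝ, |t| ≤ δ ^ 2 → f t = 0 := fun t ht => by
    simp [f, max_eq_right ((Real.sqrt_le_left hδ.le).mpr ht), hδ.ne']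
  refine ⟨b * cfcₙ f (star b * b), ?_, ?_⟩
  · have hψb : ‖star (ψ b) * ψ b‖ ≤ δ ^ 2 := by
      rw [CStarRing.norm_star_mul_self, ← sq]
      exact pow_le_pow_left₀ (norm_nonneg _) h 2
    have hvanish : cfcₙ f (star (ψ b) * ψ b) = 0 := by
      rw [← cfcₙ_zero ℝ (star (ψ b) * ψ b)]
      exact cfcₙ_congr fun t ht =>
        hf_small t ((norm_le_norm_of_mem_quasispectrum ht).trans hψb)
    have hx : IsSelfAdjoint (star b * b) := .star_mul_self b
    rw [map_mul, NonUnitalStarAlgHomClass.map_cfcₙ ψ f _ hf.continuousOn hf0 (map_continuous ψ) hx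
      (hx.map ψ), map_mul, map_star, hvanish, mul_zero]
  · have hsq : ‖b - b * cfcₙ f (star b * b)‖ ^ 2 ≤ δ ^ 2 := by
      rw [sq, ← CStarRing.norm_star_mul_self, star_mul_self_sub_mul_cfcₙ b hf hf0]
      refine norm_cfcₙ_le fun t _ => ?_
      have hone_sub : 1 - f t = δ / max √|t| δ := sub_sub_cancel _ _
      have habs : |t| ≤ max √|t| δ ^ 2 :=
        (Real.sqrt_le_left (hmax t).le).mp (le_max_left _ _)
      rw [hone_sub, norm_mul, Real.norm_eq_abs, norm_pow, Real.norm_eq_abs, abs_div,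
        abs_of_pos hδ, abs_of_pos (hmax t), div_pow, mul_div_assoc', div_le_iff₀ (by positivity)]
      nlinarith [abs_nonneg t]
    exact (sq_le_sq₀ (norm_nonneg _) hδ.le).mp hsq

section InductiveLimit

variable {I : Type*} {A B C : I → Type*} [∀ i, NonUnitalCStarAlgebra (A i)]
  [∀ i, NonUnitalCStarAlgebra (B i)] [∀ i, NonUnitalCStarAlgebra (C i)]
  {LA LB LC : Type*} [NonUnitalCStarAlgebra LA] [NonUnitalCStarAlgebra LB]
  [NonUnitalCStarAlgebra LC]
  (ιA : ∀ i, A i →⋆ₙₐ[ℂ] LA) (ιB : ∀ i, B i →⋆ₙₐ[ℂ] LB) (ιC : ∀ i, C i →⋆ₙₐ[ℂ] LC)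
  (φi : ∀ i, A i →⋆ₙₐ[ℂ] B i) (ψi : ∀ i, B i →⋆ₙₐ[ℂ] C i)
  (φ : LA →⋆ₙₐ[ℂ] LB) (ψ : LB →⋆ₙₐ[ℂ] LC)

theorem map_map_eq_zero_of_comp_eq_zero (hdA : Dense (⋃ i, Set.range (ιA i)))
    (hψφ : ∀ i (a : A i), ψi i (φi i a) = 0)
    (hφ : ∀ i, φ.comp (ιA i) = (ιB i).comp (φi i))
    (hψ : ∀ i, ψ.comp (ιB i) = (ιC i).comp (ψi i)) (y : LA) :
    ψ (φ y) = 0 := by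
  have hzero : (fun y => ψ (φ y)) = fun _ => 0 := by
    refine Continuous.ext_on hdA (by fun_prop) continuous_const ?_
    rintro _ ⟨_, ⟨i, rfl⟩, a, rfl⟩
    change (ψ.comp (φ.comp (ιA i))) a = 0
    rw [hφ, ← NonUnitalStarAlgHom.comp_assoc, hψ, NonUnitalStarAlgHom.comp_apply,
      NonUnitalStarAlgHom.comp_apply, hψφ, map_zero]
  exact congrFun hzero y

variable [Preorder I] (α : ∀ i j, i ≤ j → (A i →⋆ₙₐ[ℂ] A j))
  (β : ∀ i j, i ≤ j → (B i →⋆ₙₐ[ℂ] B j)) (γ : ∀ i j, i ≤ j → (C i →⋆ₙₐ[ℂ] C j))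

theorem isometry_of_injective_of_norm_eq_iInf (hdA : Dense (⋃ i, Set.range (ιA i)))
    (hnA : ∀ i (a : A i), ‖ιA i a‖ = ⨅ j : {j // i ≤ j}, ‖α i j.1 j.2 a‖)
    (hnB : ∀ i (b : B i), ‖ιB i b‖ = ⨅ j : {j // i ≤ j}, ‖β i j.1 j.2 b‖)
    (hφinj : ∀ i, Function.Injective (φi i))
    (hφc : ∀ i j (hij : i ≤ j), (φi j).comp (α i j hij) = (β i j hij).comp (φi i))
    (hφ : ∀ i, φ.comp (ιA i) = (ιB i).comp (φi i)) :
    Isometry φ := by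
  have hnorm : (fun y => ‖φ y‖) = fun y => ‖y‖ := by
    refine Continuous.ext_on hdA (by fun_prop) continuous_norm ?_
    rintro _ ⟨_, ⟨i, rfl⟩, a, rfl⟩
    change ‖(φ.comp (ιA i)) a‖ = ‖ιA i a‖
    rw [hφ, NonUnitalStarAlgHom.comp_apply, hnA, hnB]
    refine iInf_congr fun j => ?_
    rw [← NonUnitalStarAlgHom.comp_apply, ← hφc, NonUnitalStarAlgHom.comp_apply,
      NonUnitalStarAlgHom.norm_map _ (hφinj j)]
  exact AddMonoidHomClass.isometry_of_norm φ (congrFun hnorm)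

theorem mem_closure_range_of_map_eq_zero (hdB : Dense (⋃ i, Set.range (ιB i)))
    (hιB : ∀ i j (hij : i ≤ j), (ιB j).comp (β i j hij) = ιB i)
    (hnC : ∀ i (c : C i), ‖ιC i c‖ = ⨅ j : {j // i ≤ j}, ‖γ i j.1 j.2 c‖)
    (hker : ∀ i (b : B i), ψi i b = 0 → b ∈ Set.range (φi i))
    (hψc : ∀ i j (hij : i ≤ j), (ψi j).comp (β i j hij) = (γ i j hij).comp (ψi i))
    (hφ : ∀ i, φ.comp (ιA i) = (ιB i).comp (φi i))
    (hψ : ∀ i, ψ.comp (ιB i) = (ιC i).comp (ψi i)) {b : LB} (hb : ψ b = 0) :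
    b ∈ closure (Set.range φ) := by
  refine Metric.mem_closure_iff.mpr fun ε hε => ?_
  obtain ⟨_, hz, hbz⟩ := Metric.mem_closure_iff.mp (hdB b) (ε / 2) (half_pos hε)
  obtain ⟨i, bi, rfl⟩ := Set.mem_iUnion.mp hz
  have hψ_apply : ψ (ιB i bi) = ιC i (ψi i bi) := DFunLike.congr_fun (hψ i) bi
  have hsmall : ‖ιC i (ψi i bi)‖ < ε / 2 :=
    calc ‖ιC i (ψi i bi)‖ = ‖ψ (ιB i bi - b)‖ := by
          rw [map_sub, hb, sub_zero, ← hψ_apply]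
      _ ≤ ‖ιB i bi - b‖ := NonUnitalStarAlgHom.norm_apply_le ψ _
      _ < ε / 2 := by rwa [norm_sub_rev, ← dist_eq_norm]
  rw [hnC] at hsmall
  have : Nonempty {j // i ≤ j} := ⟨⟨i, le_rfl⟩⟩
  obtain ⟨⟨j, hij⟩, hj⟩ := exists_lt_of_ciInf_lt hsmall
  have hψc_apply : ψi j (β i j hij bi) = γ i j hij (ψi i bi) :=
    DFunLike.congr_fun (hψc i j hij) bi
  rw [← hψc_apply] at hj
  obtain ⟨k, hk, hdist⟩ :=
    exists_map_eq_zero_norm_sub_le (ψi j) (β i j hij bi) (half_pos hε) hj.le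
  obtain ⟨a, rfl⟩ := hker j k hk
  have hstage : dist (ιB i bi) (φ (ιA j a)) ≤ ε / 2 :=
    calc dist (ιB i bi) (φ (ιA j a)) = ‖ιB j (β i j hij bi - φi j a)‖ := by
          have hιB_apply : ιB j (β i j hij bi) = ιB i bi := DFunLike.congr_fun (hιB i j hij) bi
          have hφ_apply : φ (ιA j a) = ιB j (φi j a) := DFunLike.congr_fun (hφ j) a
          rw [map_sub, hιB_apply, hφ_apply, dist_eq_norm]
      _ ≤ ‖β i j hij bi - φi j a‖ := NonUnitalStarAlgHom.norm_apply_le _ _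
      _ ≤ ε / 2 := hdist
  refine ⟨φ (ιA j a), ⟨_, rfl⟩, ?_⟩
  calc dist b (φ (ιA j a)) ≤ dist b (ιB i bi) + dist (ιB i bi) (φ (ιA j a)) := dist_triangle ..
    _ < ε / 2 + ε / 2 := add_lt_add_of_lt_of_le hbz hstage
    _ = ε := add_halves ε

end InductiveLimit

theorem stmt2_general
    {I : Type*} [Preorder I]
    (A B C : I → Type*)
    [∀ i, NonUnitalCStarAlgebra (A i)] [∀ i, NonUnitalCStarAlgebra (B i)]
    [∀ i, NonUnitalCStarAlgebra (C i)]
    -- connecting maps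
    (α : ∀ i j, i ≤ j → (A i →⋆ₙₐ[ℂ] A j))
    (β : ∀ i j, i ≤ j → (B i →⋆ₙₐ[ℂ] B j))
    (γ : ∀ i j, i ≤ j → (C i →⋆ₙₐ[ℂ] C j))
    -- the inductive limits and their canonical maps
    {LA LB LC : Type*} [NonUnitalCStarAlgebra LA] [NonUnitalCStarAlgebra LB]
    [NonUnitalCStarAlgebra LC]
    (ιA : ∀ i, A i →⋆ₙₐ[ℂ] LA) (ιB : ∀ i, B i →⋆ₙₐ[ℂ] LB) (ιC : ∀ i, C i →⋆ₙₐ[ℂ] LC)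
    (hιB : ∀ i j (hij : i ≤ j), (ιB j).comp (β i j hij) = ιB i)
    (hdA : closure (⋃ i, Set.range (ιA i)) = Set.univ)
    (hdB : closure (⋃ i, Set.range (ιB i)) = Set.univ)
    (hnA : ∀ i (a : A i), ‖ιA i a‖ = ⨅ j : {j // i ≤ j}, ‖α i j.1 j.2 a‖)
    (hnB : ∀ i (b : B i), ‖ιB i b‖ = ⨅ j : {j // i ≤ j}, ‖β i j.1 j.2 b‖)
    (hnC : ∀ i (c : C i), ‖ιC i c‖ = ⨅ j : {j // i ≤ j}, ‖γ i j.1 j.2 c‖)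
    -- the levelwise short exact sequences
    (φi : ∀ i, A i →⋆ₙₐ[ℂ] B i) (ψi : ∀ i, B i →⋆ₙₐ[ℂ] C i)
    (hφinj : ∀ i, Function.Injective (φi i))
    (hexact : ∀ i, Set.range (φi i) = {b | ψi i b = 0})
    -- compatibility with the connecting maps
    (hφc : ∀ i j (hij : i ≤ j), (φi j).comp (α i j hij) = (β i j hij).comp (φi i))
    (hψc : ∀ i j (hij : i ≤ j), (ψi j).comp (β i j hij) = (γ i j hij).comp (ψi i))
    -- the induced maps on the limits
    (φ : LA →⋆ₙₐ[ℂ] LB) (ψ : LB →⋆ₙₐ[ℂ] LC)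
    (hφ : ∀ i, φ.comp (ιA i) = (ιB i).comp (φi i))
    (hψ : ∀ i, ψ.comp (ιB i) = (ιC i).comp (ψi i)) :
    (∀ b : LB, ψ b = 0 → b ∈ Set.range φ) ∧ {b : LB | ψ b = 0} = Set.range φ := by
  have hdA' : Dense (⋃ i, Set.range (ιA i)) := dense_iff_closure_eq.mpr hdA
  have hclosed : IsClosed (Set.range φ) :=
    (isometry_of_injective_of_norm_eq_iInf ιA ιB φi φ α β hdA' hnA hnB hφinj hφc hφ)
      |>.isClosedEmbedding.isClosed_range
  have hker : ∀ b : LB, ψ b = 0 → b ∈ Set.range φ := fun b hb =>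
    hclosed.closure_subset <| mem_closure_range_of_map_eq_zero ιA ιB ιC φi ψi φ ψ β γ
      (dense_iff_closure_eq.mpr hdB) hιB hnC (fun i b hb => (hexact i).ge hb) hψc hφ hψ hb
  refine ⟨hker, Set.Subset.antisymm hker ?_⟩
  rintro _ ⟨y, rfl⟩
  exact map_map_eq_zero_of_comp_eq_zero ιA ιB ιC φi ψi φ ψ hdA'
    (fun i a => (hexact i).le ⟨a, rfl⟩) hφ hψ y

/-- In the setting of compatible inductive systems of C*-algebras with levelwise short exact sequences, if `b` in the limit `B` satisfies `ψ b = 0` then `b` lies in the image of the induced map `φ : A → B`; consequently `Ker ψ = Im φ`.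
-/
theorem stmt2
    {I : Type*} [Preorder I] [IsDirected I (· ≤ ·)] [Nonempty I]
    (A B C : I → Type*)
    [∀ i, NonUnitalCStarAlgebra (A i)] [∀ i, NonUnitalCStarAlgebra (B i)]
    [∀ i, NonUnitalCStarAlgebra (C i)]
    -- connecting maps
    (α : ∀ i j, i ≤ j → (A i →⋆ₙₐ[ℂ] A j))
    (β : ∀ i j, i ≤ j → (B i →⋆ₙₐ[ℂ] B j))
    (γ : ∀ i j, i ≤ j → (C i →⋆ₙₐ[ℂ] C j))
    (hαid : ∀ i, α i i le_rfl = NonUnitalStarAlgHom.id ℂ (A i))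
    (hβid : ∀ i, β i i le_rfl = NonUnitalStarAlgHom.id ℂ (B i))
    (hγid : ∀ i, γ i i le_rfl = NonUnitalStarAlgHom.id ℂ (C i))
    (hαcomp : ∀ i j k (hij : i ≤ j) (hjk : j ≤ k),
      (α j k hjk).comp (α i j hij) = α i k (hij.trans hjk))
    (hβcomp : ∀ i j k (hij : i ≤ j) (hjk : j ≤ k),
      (β j k hjk).comp (β i j hij) = β i k (hij.trans hjk))
    (hγcomp : ∀ i j k (hij : i ≤ j) (hjk : j ≤ k),
      (γ j k hjk).comp (γ i j hij) = γ i k (hij.trans hjk))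
    -- the inductive limits and their canonical maps
    {LA LB LC : Type*} [NonUnitalCStarAlgebra LA] [NonUnitalCStarAlgebra LB]
    [NonUnitalCStarAlgebra LC]
    (ιA : ∀ i, A i →⋆ₙₐ[ℂ] LA) (ιB : ∀ i, B i →⋆ₙₐ[ℂ] LB) (ιC : ∀ i, C i →⋆ₙₐ[ℂ] LC)
    (hιA : ∀ i j (hij : i ≤ j), (ιA j).comp (α i j hij) = ιA i)
    (hιB : ∀ i j (hij : i ≤ j), (ιB j).comp (β i j hij) = ιB i)
    (hιC : ∀ i j (hij : i ≤ j), (ιC j).comp (γ i j hij) = ιC i)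
    (hdA : closure (⋃ i, Set.range (ιA i)) = Set.univ)
    (hdB : closure (⋃ i, Set.range (ιB i)) = Set.univ)
    (hdC : closure (⋃ i, Set.range (ιC i)) = Set.univ)
    (hnA : ∀ i (a : A i), ‖ιA i a‖ = ⨅ j : {j // i ≤ j}, ‖α i j.1 j.2 a‖)
    (hnB : ∀ i (b : B i), ‖ιB i b‖ = ⨅ j : {j // i ≤ j}, ‖β i j.1 j.2 b‖)
    (hnC : ∀ i (c : C i), ‖ιC i c‖ = ⨅ j : {j // i ≤ j}, ‖γ i j.1 j.2 c‖)
    -- the levelwise short exact sequences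
    (φi : ∀ i, A i →⋆ₙₐ[ℂ] B i) (ψi : ∀ i, B i →⋆ₙₐ[ℂ] C i)
    (hφinj : ∀ i, Function.Injective (φi i))
    (hψsurj : ∀ i, Function.Surjective (ψi i))
    (hexact : ∀ i, Set.range (φi i) = {b | ψi i b = 0})
    -- compatibility with the connecting maps
    (hφc : ∀ i j (hij : i ≤ j), (φi j).comp (α i j hij) = (β i j hij).comp (φi i))
    (hψc : ∀ i j (hij : i ≤ j), (ψi j).comp (β i j hij) = (γ i j hij).comp (ψi i))
    -- the induced maps on the limits
    (φ : LA →⋆ₙₐ[ℂ] LB) (ψ : LB →⋆ₙₐ[ℂ] LC)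
    (hφ : ∀ i, φ.comp (ιA i) = (ιB i).comp (φi i))
    (hψ : ∀ i, ψ.comp (ιB i) = (ιC i).comp (ψi i)) :
    (∀ b : LB, ψ b = 0 → b ∈ Set.range φ) ∧ {b : LB | ψ b = 0} = Set.range φ :=
  stmt2_general A B C α β γ ιA ιB ιC hιB hdA hdB hnA hnB hnC φi ψi hφinj hexact hφc hψc φ ψ hφ hψ
end

section
/- Let $(A, P, \alpha)$ be a semigroup dynamical system and $I$ a C*-algebra. Then the spatial tensor product $I \otimes (A \rtimes_{red} P)$ is *-isomorphic to $(I \otimes A) \rtimes_{red} P$, where $P$ acts diagonally on $I \otimes A$ with the trivial action on $I$. The isomorphism is implemented by the unitary $U : I \otimes (\ell^2(P) \otimes A) \to \ell^2(P) \otimes (I \otimes A)$ sending $x \otimes (\delta_t \otimes y) \mapsto \delta_t \otimes (x \otimes y)$, which satisfies $U(x \otimes \pi_A(a))U^* = \pi_{I\otimes A}(x \otimes a)$ and $U(1 \otimes V_s)U^* = \widetilde{V}_s$. -/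
/-- Data realizing the Hilbert space tensor product `V ⊗ W` as `T`. -/
structure HTensor (V W T : Type*)
    [NormedAddCommGroup V] [InnerProductSpace ℂ V]
    [NormedAddCommGroup W] [InnerProductSpace ℂ W]
    [NormedAddCommGroup T] [InnerProductSpace ℂ T] where
  pair : V →ₗ[ℂ] W →ₗ[ℂ] T
  inner_pair : ∀ (v v' : V) (w w' : W),
    (inner ℂ (pair v w) (pair v' w') : ℂ) = (inner ℂ v v' : ℂ) * (inner ℂ w w' : ℂ)
  dense_range : closure (↑(Submodule.span ℂ {t : T | ∃ v w, t = pair v w}) : Set T)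
    = Set.univ

/-!
Both identities are checked on the total set of vectors `ξ ⊗ δ_t ⊗ η`, which `U` sends to
`δ_t ⊗ (ξ ⊗ η)`; there both sides agree by the defining formulas of `π`, `V`, `π'`, `V'`.
Conjugation by `U` is a ⋆-isomorphism and a homeomorphism of the operator algebras, so it carries
the closed ⋆-algebra generated by the `x ⊗ V_s π(a)` onto the one generated by their images
`Ṽ_s π'(x ⊗ a)`.
-/

namespace LinearIsometryEquiv

variable {𝕜 H K : Type*} [RCLike 𝕜]
  [NormedAddCommGroup H] [InnerProductSpace 𝕜 H] [CompleteSpace H]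
  [NormedAddCommGroup K] [InnerProductSpace 𝕜 K] [CompleteSpace K]

theorem conjStarAlgEquiv_image_closure_adjoin (e : H ≃ₗᵢ[𝕜] K) (S : Set (H →L[𝕜] H)) :
    e.conjStarAlgEquiv '' closure (NonUnitalStarAlgebra.adjoin 𝕜 S) =
      closure (NonUnitalStarAlgebra.adjoin 𝕜 (e.conjStarAlgEquiv '' S)) := by
  rw [← NonUnitalStarAlgHom.map_adjoin, NonUnitalStarSubalgebra.coe_map]
  exact e.toContinuousLinearEquiv.conjContinuousAlgEquiv.image_closure _

end LinearIsometryEquiv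

namespace HTensor

variable {V W T : Type*}
  [NormedAddCommGroup V] [InnerProductSpace ℂ V]
  [NormedAddCommGroup W] [InnerProductSpace ℂ W]
  [NormedAddCommGroup T] [InnerProductSpace ℂ T]
  {X : Type*} [NormedAddCommGroup X] [NormedSpace ℂ X]

theorem ext_continuousLinearMap (t : HTensor V W T) {f g : T →L[ℂ] X}
    (h : ∀ v w, f (t.pair v w) = g (t.pair v w)) : f = g := by
  ext z
  have hspan : Set.EqOn f g (Submodule.span ℂ {z : T | ∃ v w, z = t.pair v w}) := by
    intro z hz
    induction hz using Submodule.span_induction with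
    | mem z hz => obtain ⟨v, w, rfl⟩ := hz; exact h v w
    | zero => simp
    | add a b _ _ ha hb => simp [ha, hb]
    | smul c a _ ha => simp [ha]
  exact hspan.closure f.continuous g.continuous (t.dense_range ▸ Set.mem_univ z)

theorem lp_ext {ι : Type*} [DecidableEq ι] (t : HTensor V W T)
    {f g : lp (fun _ : ι => T) 2 →L[ℂ] X}
    (h : ∀ i v w, f (lp.single 2 i (t.pair v w)) = g (lp.single 2 i (t.pair v w))) :
    f = g :=
  lp.ext_continuousLinearMap ENNReal.ofNat_ne_top fun i =>
    t.ext_continuousLinearMap fun v w => h i v w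

theorem conjStarAlgEquiv_eq_of_apply_pair_single {ι KI K KIA HT : Type*}
    [DecidableEq ι]
    [NormedAddCommGroup KI] [InnerProductSpace ℂ KI]
    [NormedAddCommGroup K] [InnerProductSpace ℂ K]
    [NormedAddCommGroup KIA] [InnerProductSpace ℂ KIA] [CompleteSpace KIA]
    [NormedAddCommGroup HT] [InnerProductSpace ℂ HT] [CompleteSpace HT]
    (tIH : HTensor KI (lp (fun _ : ι => K) 2) HT) (tKA : HTensor KI K KIA)
    (U : HT ≃ₗᵢ[ℂ] lp (fun _ : ι => KIA) 2)
    (hU : ∀ ξ t η, U (tIH.pair ξ (lp.single 2 t η)) = lp.single 2 t (tKA.pair ξ η))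
    ⦃O : HT →L[ℂ] HT⦄ ⦃N : lp (fun _ : ι => KIA) 2 →L[ℂ] lp (fun _ : ι => KIA) 2⦄
    (h : ∀ t ξ η, U (O (tIH.pair ξ (lp.single 2 t η))) = N (lp.single 2 t (tKA.pair ξ η))) :
    U.conjStarAlgEquiv O = N :=
  tKA.lp_ext fun t ξ η => by
    rw [LinearIsometryEquiv.conjStarAlgEquiv_apply_apply, ← h, ← hU, U.symm_apply_apply]

end HTensor

theorem stmt4_general {P : Type*} [Monoid P] [DecidableEq P]
    {A I : Type*} [NonUnitalCStarAlgebra A] [NonUnitalCStarAlgebra I]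
    -- faithful nondegenerate representations of `A` and `I`
    {K KI : Type*} [NormedAddCommGroup K] [InnerProductSpace ℂ K] [CompleteSpace K]
    [NormedAddCommGroup KI] [InnerProductSpace ℂ KI] [CompleteSpace KI]
    (ρA : A →⋆ₙₐ[ℂ] (K →L[ℂ] K))
    (ρI : I →⋆ₙₐ[ℂ] (KI →L[ℂ] KI))
    -- the action of `P` on `A`
    (α : P → (A →⋆ₙₐ[ℂ] A))
    -- `ℓ²(P) ⊗ K` and the left regular representation `(π, V)` of `(A, P, α)`
    (π : A → (lp (fun _ : P => K) 2 →L[ℂ] lp (fun _ : P => K) 2))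
    (hπ : ∀ (x : A) (t : P) (ξ : K),
      π x (lp.single 2 t ξ) = lp.single 2 t (ρA (α t x) ξ))
    (V : P → (lp (fun _ : P => K) 2 →L[ℂ] lp (fun _ : P => K) 2))
    (hV : ∀ (s t : P) (ξ : K), V s (lp.single 2 t ξ) = lp.single 2 (t * s) ξ)
    -- `KI ⊗ K` and elementary tensor operators on it
    {KIA : Type*} [NormedAddCommGroup KIA] [InnerProductSpace ℂ KIA] [CompleteSpace KIA]
    (tKA : HTensor KI K KIA)
    (otimes1 : (KI →L[ℂ] KI) → (K →L[ℂ] K) → (KIA →L[ℂ] KIA))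
    (hotimes1 : ∀ S T ξ η, otimes1 S T (tKA.pair ξ η) = tKA.pair (S ξ) (T η))
    -- `KI ⊗ (ℓ²(P) ⊗ K)` and elementary tensor operators on it
    {HT : Type*} [NormedAddCommGroup HT] [InnerProductSpace ℂ HT] [CompleteSpace HT]
    (tIH : HTensor KI (lp (fun _ : P => K) 2) HT)
    (otimes2 : (KI →L[ℂ] KI) → (lp (fun _ : P => K) 2 →L[ℂ] lp (fun _ : P => K) 2) →
      (HT →L[ℂ] HT))
    (hotimes2 : ∀ S T ξ η, otimes2 S T (tIH.pair ξ η) = tIH.pair (S ξ) (T η))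
    -- the canonical unitary `U`
    (U : HT ≃ₗᵢ[ℂ] lp (fun _ : P => KIA) 2)
    (hU : ∀ (ξ : KI) (t : P) (η : K),
      U (tIH.pair ξ (lp.single 2 t η)) = lp.single 2 t (tKA.pair ξ η))
    -- the left regular representation `(π_{I⊗A}, Ṽ)` of `(I ⊗ A, P, 1 ⊗ α)`
    (π' : I → A → (lp (fun _ : P => KIA) 2 →L[ℂ] lp (fun _ : P => KIA) 2))
    (hπ' : ∀ (x : I) (a : A) (t : P) (ζ : KIA),
      π' x a (lp.single 2 t ζ) = lp.single 2 t (otimes1 (ρI x) (ρA (α t a)) ζ))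
    (V' : P → (lp (fun _ : P => KIA) 2 →L[ℂ] lp (fun _ : P => KIA) 2))
    (hV' : ∀ (s t : P) (ζ : KIA), V' s (lp.single 2 t ζ) = lp.single 2 (t * s) ζ) :
    -- `U (x ⊗ π_A(a)) U* = π_{I⊗A}(x ⊗ a)`
    (∀ (x : I) (a : A),
      (U.toContinuousLinearEquiv : HT ≃L[ℂ] lp (fun _ : P => KIA) 2).toContinuousLinearMap
        ∘L otimes2 (ρI x) (π a)
        ∘L (U.symm.toContinuousLinearEquiv :
            lp (fun _ : P => KIA) 2 ≃L[ℂ] HT).toContinuousLinearMap = π' x a) ∧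
    -- `U (1 ⊗ V_s) U* = Ṽ_s`
    (∀ s : P,
      (U.toContinuousLinearEquiv : HT ≃L[ℂ] lp (fun _ : P => KIA) 2).toContinuousLinearMap
        ∘L otimes2 1 (V s)
        ∘L (U.symm.toContinuousLinearEquiv :
            lp (fun _ : P => KIA) 2 ≃L[ℂ] HT).toContinuousLinearMap = V' s) ∧
    -- conjugation by `U` maps `I ⊗ (A ⋊_red P)` onto `(I ⊗ A) ⋊_red P`
    ((fun T : HT →L[ℂ] HT =>
        (U.toContinuousLinearEquiv : HT ≃L[ℂ] lp (fun _ : P => KIA) 2).toContinuousLinearMap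
          ∘L T ∘L (U.symm.toContinuousLinearEquiv :
              lp (fun _ : P => KIA) 2 ≃L[ℂ] HT).toContinuousLinearMap) ''
      closure (↑(NonUnitalStarAlgebra.adjoin ℂ
        {T : HT →L[ℂ] HT | ∃ (x : I) (s : P) (a : A),
          T = otimes2 (ρI x) (V s ∘L π a)}) : Set (HT →L[ℂ] HT))
      = closure (↑(NonUnitalStarAlgebra.adjoin ℂ
        {T : lp (fun _ : P => KIA) 2 →L[ℂ] lp (fun _ : P => KIA) 2 |
          ∃ (s : P) (x : I) (a : A), T = V' s ∘L π' x a})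
          : Set (lp (fun _ : P => KIA) 2 →L[ℂ] lp (fun _ : P => KIA) 2))) := by
  have conj := tIH.conjStarAlgEquiv_eq_of_apply_pair_single tKA U hU
  have conj_generator : ∀ x s a,
      U.conjStarAlgEquiv (otimes2 (ρI x) (V s ∘L π a)) = V' s ∘L π' x a :=
    fun x s a => conj fun t ξ η => by
      simp only [hotimes2, ContinuousLinearMap.comp_apply, hπ, hV, hU, hπ', hV',
        hotimes1]
  refine ⟨fun x a => conj fun t ξ η => ?_, fun s => conj fun t ξ η => ?_, ?_⟩
  · simp only [hotimes2, hπ, hU, hπ', hotimes1]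
  · simp only [hotimes2, hV, hU, hV', one_apply_eq_self]
  change U.conjStarAlgEquiv '' _ = _
  rw [U.conjStarAlgEquiv_image_closure_adjoin]
  congr 3
  ext T
  constructor
  · rintro ⟨_, ⟨x, s, a, rfl⟩, rfl⟩
    exact ⟨s, x, a, conj_generator x s a⟩
  · rintro ⟨s, x, a, rfl⟩
    exact ⟨_, ⟨x, s, a, rfl⟩, conj_generator x s a⟩

/-- For a semigroup dynamical system `(A, P, α)` and a
C*-algebra `I`, the unitary `U : I ⊗ (ℓ²(P) ⊗ A) → ℓ²(P) ⊗ (I ⊗ A)`,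
`x ⊗ (δ_t ⊗ y) ↦ δ_t ⊗ (x ⊗ y)`, satisfies
`U (x ⊗ π_A(a)) U* = π_{I⊗A}(x ⊗ a)` and `U (1 ⊗ V_s) U* = Ṽ_s`, and
conjugation by `U` carries `I ⊗ (A ⋊_red P)` *-isomorphically onto
`(I ⊗ A) ⋊_red P`.  Everything is realized spatially: `A` and `I` act
faithfully and nondegenerately on Hilbert spaces `K`, `KI`; `ℓ²(P) ⊗ K` is the
Hilbert sum `lp (fun _ : P => K) 2`; the remaining tensor products are
presented by `HTensor` data, with elementary-tensor operators `otimes1`,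
`otimes2` given by their defining properties. -/
theorem stmt4 {P : Type*} [Monoid P] [DecidableEq P]
    {A I : Type*} [NonUnitalCStarAlgebra A] [NonUnitalCStarAlgebra I]
    -- faithful nondegenerate representations of `A` and `I`
    {K KI : Type*} [NormedAddCommGroup K] [InnerProductSpace ℂ K] [CompleteSpace K]
    [NormedAddCommGroup KI] [InnerProductSpace ℂ KI] [CompleteSpace KI]
    (ρA : A →⋆ₙₐ[ℂ] (K →L[ℂ] K)) (hρA : Function.Injective ρA)
    (hρAnd : closure (↑(Submodule.span ℂ {ξ : K | ∃ a η, ξ = ρA a η}) : Set K) = Set.univ)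
    (ρI : I →⋆ₙₐ[ℂ] (KI →L[ℂ] KI)) (hρI : Function.Injective ρI)
    (hρInd : closure (↑(Submodule.span ℂ {ξ : KI | ∃ x η, ξ = ρI x η}) : Set KI) = Set.univ)
    -- the action of `P` on `A`
    (α : P → (A →⋆ₙₐ[ℂ] A))
    (hαmul : ∀ s t, (α s).comp (α t) = α (s * t))
    -- `ℓ²(P) ⊗ K` and the left regular representation `(π, V)` of `(A, P, α)`
    (π : A → (lp (fun _ : P => K) 2 →L[ℂ] lp (fun _ : P => K) 2))
    (hπ : ∀ (x : A) (t : P) (ξ : K),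
      π x (lp.single 2 t ξ) = lp.single 2 t (ρA (α t x) ξ))
    (V : P → (lp (fun _ : P => K) 2 →L[ℂ] lp (fun _ : P => K) 2))
    (hV : ∀ (s t : P) (ξ : K), V s (lp.single 2 t ξ) = lp.single 2 (t * s) ξ)
    -- `KI ⊗ K` and elementary tensor operators on it
    {KIA : Type*} [NormedAddCommGroup KIA] [InnerProductSpace ℂ KIA] [CompleteSpace KIA]
    (tKA : HTensor KI K KIA)
    (otimes1 : (KI →L[ℂ] KI) → (K →L[ℂ] K) → (KIA →L[ℂ] KIA))
    (hotimes1 : ∀ S T ξ η, otimes1 S T (tKA.pair ξ η) = tKA.pair (S ξ) (T η))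
    -- `KI ⊗ (ℓ²(P) ⊗ K)` and elementary tensor operators on it
    {HT : Type*} [NormedAddCommGroup HT] [InnerProductSpace ℂ HT] [CompleteSpace HT]
    (tIH : HTensor KI (lp (fun _ : P => K) 2) HT)
    (otimes2 : (KI →L[ℂ] KI) → (lp (fun _ : P => K) 2 →L[ℂ] lp (fun _ : P => K) 2) →
      (HT →L[ℂ] HT))
    (hotimes2 : ∀ S T ξ η, otimes2 S T (tIH.pair ξ η) = tIH.pair (S ξ) (T η))
    -- the canonical unitary `U`
    (U : HT ≃ₗᵢ[ℂ] lp (fun _ : P => KIA) 2)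
    (hU : ∀ (ξ : KI) (t : P) (η : K),
      U (tIH.pair ξ (lp.single 2 t η)) = lp.single 2 t (tKA.pair ξ η))
    -- the left regular representation `(π_{I⊗A}, Ṽ)` of `(I ⊗ A, P, 1 ⊗ α)`
    (π' : I → A → (lp (fun _ : P => KIA) 2 →L[ℂ] lp (fun _ : P => KIA) 2))
    (hπ' : ∀ (x : I) (a : A) (t : P) (ζ : KIA),
      π' x a (lp.single 2 t ζ) = lp.single 2 t (otimes1 (ρI x) (ρA (α t a)) ζ))
    (V' : P → (lp (fun _ : P => KIA) 2 →L[ℂ] lp (fun _ : P => KIA) 2))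
    (hV' : ∀ (s t : P) (ζ : KIA), V' s (lp.single 2 t ζ) = lp.single 2 (t * s) ζ) :
    -- `U (x ⊗ π_A(a)) U* = π_{I⊗A}(x ⊗ a)`
    (∀ (x : I) (a : A),
      (U.toContinuousLinearEquiv : HT ≃L[ℂ] lp (fun _ : P => KIA) 2).toContinuousLinearMap
        ∘L otimes2 (ρI x) (π a)
        ∘L (U.symm.toContinuousLinearEquiv :
            lp (fun _ : P => KIA) 2 ≃L[ℂ] HT).toContinuousLinearMap = π' x a) ∧
    -- `U (1 ⊗ V_s) U* = Ṽ_s`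
    (∀ s : P,
      (U.toContinuousLinearEquiv : HT ≃L[ℂ] lp (fun _ : P => KIA) 2).toContinuousLinearMap
        ∘L otimes2 1 (V s)
        ∘L (U.symm.toContinuousLinearEquiv :
            lp (fun _ : P => KIA) 2 ≃L[ℂ] HT).toContinuousLinearMap = V' s) ∧
    -- conjugation by `U` maps `I ⊗ (A ⋊_red P)` onto `(I ⊗ A) ⋊_red P`
    ((fun T : HT →L[ℂ] HT =>
        (U.toContinuousLinearEquiv : HT ≃L[ℂ] lp (fun _ : P => KIA) 2).toContinuousLinearMap
          ∘L T ∘L (U.symm.toContinuousLinearEquiv :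
              lp (fun _ : P => KIA) 2 ≃L[ℂ] HT).toContinuousLinearMap) ''
      closure (↑(NonUnitalStarAlgebra.adjoin ℂ
        {T : HT →L[ℂ] HT | ∃ (x : I) (s : P) (a : A),
          T = otimes2 (ρI x) (V s ∘L π a)}) : Set (HT →L[ℂ] HT))
      = closure (↑(NonUnitalStarAlgebra.adjoin ℂ
        {T : lp (fun _ : P => KIA) 2 →L[ℂ] lp (fun _ : P => KIA) 2 |
          ∃ (s : P) (x : I) (a : A), T = V' s ∘L π' x a})
          : Set (lp (fun _ : P => KIA) 2 →L[ℂ] lp (fun _ : P => KIA) 2))) :=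
  stmt4_general ρA ρI α π hπ V hV tKA otimes1 hotimes1 tIH otimes2 hotimes2 U hU π' hπ' V' hV'
end

section
/- Let $G$ be a group with subsemigroup $P \ni e$. Define a preorder on $G$ by $x \le y$ iff $yx^{-1} \in P$. Let $P$ act on the power set of $G$ by right translation, and let $\Omega$ be the closure of $\{P^{-1}a : a \in P\}$ in $\{0,1\}^G$. For $r \in P$ let $\Omega r := \{F \in \Omega : r \in F\}$. If $(P,G)$ is quasi-lattice ordered, then for $p, q \in P$: $\Omega p \cap \Omega q = \emptyset$ when $p$ and $q$ have no common upper bound, and $\Omega p \cap \Omega q = \Omega(p \vee q)$ when the least upper bound $p \vee q$ exists. -/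
open scoped Classical

/-- `x ≤ y` iff `y * x⁻¹ ∈ P`. -/
def whLe {G : Type*} [Group G] (P : Submonoid G) (x y : G) : Prop := y * x⁻¹ ∈ P

/-- The Wiener--Hopf space `Ω`: the closure of `{P⁻¹a : a ∈ P}` in the power
set of `G`, realized as `{0,1}^G = G → Bool` with the product topology.
Note `x ∈ P⁻¹a ↔ x ≤ a`. -/
noncomputable def whOmega {G : Type*} [Group G] (P : Submonoid G) : Set (G → Bool) :=
  closure {F | ∃ a ∈ P, F = fun x => decide (whLe P x a)}

lemma whLe_trans {G : Type*} [Group G] (P : Submonoid G) {x y z : G}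
    (h1 : whLe P x y) (h2 : whLe P y z) : whLe P x z := by
  have : z * x⁻¹ = (z * y⁻¹) * (y * x⁻¹) := by group
  unfold whLe at *
  rw [this]
  exact P.mul_mem h2 h1

lemma eval_isClopen {G : Type*} (p : G) (b : Bool) :
    IsClopen {F : G → Bool | F p = b} :=
  (isClopen_discrete {b}).preimage (continuous_apply p)

lemma whOmega_subset {G : Type*} [Group G] (P : Submonoid G)
    (C : Set (G → Bool)) (hC : IsClosed C)
    (hbase : ∀ a ∈ P, (fun x => decide (whLe P x a)) ∈ C) :
    whOmega P ⊆ C := by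
  apply closure_minimal _ hC
  rintro F ⟨a, ha, rfl⟩
  exact hbase a ha

lemma whOmega_hered {G : Type*} [Group G] (P : Submonoid G) {s t : G}
    (hst : whLe P s t) {F : G → Bool} (hF : F ∈ whOmega P) (ht : F t = true) :
    F s = true := by
  have := whOmega_subset P ({F | F t = true}ᶜ ∪ {F | F s = true})
    (((eval_isClopen t true).compl.isClosed).union (eval_isClopen s true).isClosed)
    (fun a ha => by
      by_cases h : decide (whLe P t a) = true
      · right
        simp only [Set.mem_setOf_eq, decide_eq_true_eq] at *
        exact whLe_trans P hst h
      · left; simpa using h) hF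
  rcases this with h | h
  · exact absurd ht h
  · exact h

/-- If `(P, G)` is quasi-lattice ordered then, for `p, q ∈ P`,
`Ωp ∩ Ωq = ∅` when `p` and `q` have no common upper bound, and
`Ωp ∩ Ωq = Ω(p ∨ q)` when a least upper bound exists, where
`Ωr = {F ∈ Ω : r ∈ F}`. -/
theorem stmt5 {G : Type*} [Group G] (P : Submonoid G)
    (hql : ∀ x y : G, (∃ z, whLe P x z ∧ whLe P y z) →
      ∃ z, whLe P x z ∧ whLe P y z ∧ ∀ w, whLe P x w → whLe P y w → whLe P z w)
    (p q : G) (hp : p ∈ P) (hq : q ∈ P) :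
    ((∀ z, ¬ (whLe P p z ∧ whLe P q z)) →
      {F ∈ whOmega P | F p = true} ∩ {F ∈ whOmega P | F q = true} = ∅) ∧
    (∀ r : G, (whLe P p r ∧ whLe P q r ∧ ∀ w, whLe P p w → whLe P q w → whLe P r w) →
      {F ∈ whOmega P | F p = true} ∩ {F ∈ whOmega P | F q = true} =
        {F ∈ whOmega P | F r = true}) := by
  constructor
  · intro hub
    ext F
    simp only [Set.mem_inter_iff, Set.mem_setOf_eq, Set.mem_empty_iff_false, iff_false]
    rintro ⟨⟨hFΩ, hFp⟩, _, hFq⟩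
    have := whOmega_subset P ({F | F p = true}ᶜ ∪ {F | F q = true}ᶜ)
      (((eval_isClopen p true).compl.isClosed).union ((eval_isClopen q true).compl.isClosed))
      (fun a ha => by
        by_contra h
        simp only [Set.mem_union, Set.mem_compl_iff, Set.mem_setOf_eq, not_or, not_not,
          decide_eq_true_eq] at h
        exact hub a ⟨h.1, h.2⟩) hFΩ
    rcases this with h | h
    · exact h hFp
    · exact h hFq
  · rintro r ⟨hpr, hqr, hlub⟩
    ext F
    simp only [Set.mem_inter_iff, Set.mem_setOf_eq]
    constructor
    · rintro ⟨⟨hFΩ, hFp⟩, _, hFq⟩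
      refine ⟨hFΩ, ?_⟩
      have := whOmega_subset P ({F | F p = true}ᶜ ∪ {F | F q = true}ᶜ ∪ {F | F r = true})
        ((((eval_isClopen p true).compl.isClosed).union
          ((eval_isClopen q true).compl.isClosed)).union (eval_isClopen r true).isClosed)
        (fun a ha => by
          by_cases h1 : decide (whLe P p a) = true
          · by_cases h2 : decide (whLe P q a) = true
            · right
              simp only [Set.mem_setOf_eq, decide_eq_true_eq] at *
              exact hlub a h1 h2
            · left; right; simpa using h2
          · left; left; simpa using h1) hFΩ
      rcases this with (h | h) | h
      · exact absurd hFp h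
      · exact absurd hFq h
      · exact h
    · rintro ⟨hFΩ, hFr⟩
      exact ⟨⟨hFΩ, whOmega_hered P hpr hFΩ hFr⟩, hFΩ, whOmega_hered P hqr hFΩ hFr⟩
end

section
/- Let $P$ be a subsemigroup of a group $G$ with the preorder $x \le y \iff yx^{-1} \in P$. Fix $p_0 \in P$ and let $f : [p_0, P) \to [0,\infty)$ be a decreasing function on $[p_0,P) := \{p \in P : p \ge p_0\}$ (i.e. $f(x) \le f(y)$ whenever $x \ge y$). Then the map $\phi : \Omega \to [0,\infty)$ defined by $\phi(F) = 0$ if $p_0 \notin F$, and $\phi(F) = \inf\{f(p) : p \in F, p \ge p_0\}$ if $p_0 \in F$, is upper semicontinuous. -/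
open scoped Classical

/-- Fix `p₀ ∈ P` and a decreasing nonnegative function `f` on
`[p₀, P) = {p ∈ P : p ≥ p₀}`.  Then the map `φ : Ω → [0,∞)` given by
`φ(F) = 0` if `p₀ ∉ F` and `φ(F) = inf {f p : p ∈ F, p ≥ p₀}` if `p₀ ∈ F`
is upper semicontinuous: `{F : φ F < α}` is open for every `α > 0`. -/
theorem stmt7 {G : Type*} [Group G] (P : Submonoid G)
    (p₀ : G) (hp₀ : p₀ ∈ P) (f : G → ℝ)
    (hf0 : ∀ p, whLe P p₀ p → 0 ≤ f p)
    (hdec : ∀ x y, whLe P p₀ x → whLe P p₀ y → whLe P y x → f x ≤ f y)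
    (φ : whOmega P → ℝ)
    (hφ : ∀ F : whOmega P, φ F =
      if (F : G → Bool) p₀ = true then
        sInf {y : ℝ | ∃ p, (F : G → Bool) p = true ∧ whLe P p₀ p ∧ y = f p}
      else 0) :
    ∀ α : ℝ, 0 < α → IsOpen {F : whOmega P | φ F < α} := by
  intro α hα
  rw [isOpen_iff_mem_nhds]
  intro F hF
  have hcont : ∀ q : G, Continuous fun F' : whOmega P => (F' : G → Bool) q :=
    fun q => (continuous_apply q).comp continuous_subtype_val
  by_cases h0 : (F : G → Bool) p₀ = true
  · have hne : {y : ℝ | ∃ p, (F : G → Bool) p = true ∧ whLe P p₀ p ∧ y = f p}.Nonempty :=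
      ⟨f p₀, p₀, h0, by simpa [whLe] using P.one_mem, rfl⟩
    have hlt : sInf {y : ℝ | ∃ p, (F : G → Bool) p = true ∧ whLe P p₀ p ∧ y = f p} < α := by
      have := hF
      rwa [Set.mem_setOf_eq, hφ F, if_pos h0] at this
    obtain ⟨y, ⟨p, hpF, hpge, rfl⟩, hy⟩ := exists_lt_of_csInf_lt hne hlt
    have hopen : IsOpen {F' : whOmega P | (F' : G → Bool) p = true} :=
      (isOpen_discrete {true}).preimage (hcont p)
    refine Filter.mem_of_superset (hopen.mem_nhds hpF) ?_
    intro F' hF'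
    show φ F' < α
    rw [hφ F']
    split_ifs with h
    · refine lt_of_le_of_lt (csInf_le ⟨0, ?_⟩ ⟨p, hF', hpge, rfl⟩) hy
      rintro z ⟨q, _, hq, rfl⟩
      exact hf0 q hq
    · exact hα
  · have hopen : IsOpen {F' : whOmega P | (F' : G → Bool) p₀ = false} :=
      (isOpen_discrete {false}).preimage (hcont p₀)
    have hmem : (F : G → Bool) p₀ = false := by
      cases hb : (F : G → Bool) p₀ with
      | false => rfl
      | true => exact absurd hb h0
    refine Filter.mem_of_superset (hopen.mem_nhds hmem) ?_
    intro F' hF'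
    show φ F' < α
    rw [hφ F', if_neg (by simp [Set.mem_setOf_eq.mp hF'])]
    exact hα
end
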